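/- Let α be a real number with 0 ≤ α < 2/3, and let s and n be integers with s ≥ 2, s ≡ 2 (mod 3), n ≥ 25 and n ≥ (5s+8)/3. Then λ_α(K_s ∨ (K_{n−⌊5s/3⌋−1} ∪ (⌊2s/3⌋+1)K_1)) ≤ λ_α(K_2 ∨ (K_{n−4} ∪ 2K_1)), where ⌊5s/3⌋ = (5s−1)/3 and ⌊2s/3⌋ = (2s−1)/3. -/

import Mathlib

open SimpleGraph

/-- The `Aα`-matrix of a finite simple graph: `Aα(G) = α·D(G) + (1-α)·A(G)`. -/
noncomputable def aAlphaMatrix {V : Type*} [Finite V] (α : ℝ) (G : SimpleGraph V) :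
    Matrix V V ℝ :=
  letI := Fintype.ofFinite V
  letI := Classical.decEq V
  letI : DecidableRel G.Adj := Classical.decRel _
  α • Matrix.diagonal (fun v => (G.degree v : ℝ)) + (1 - α) • (G.adjMatrix ℝ)

/-- The `Aα`-spectral radius: the largest eigenvalue of `Aα(G)` (the supremum of its real
spectrum; all eigenvalues of this symmetric matrix are real). -/
noncomputable def lambdaAlpha {V : Type*} [Finite V] (α : ℝ) (G : SimpleGraph V) : ℝ :=
  letI := Fintype.ofFinite V
  letI := Classical.decEq V
  sSup (spectrum ℝ (aAlphaMatrix α G))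

/-- The join `G ∨ H` of two graphs on disjoint vertex sets. -/
def graphJoin {V W : Type*} (G : SimpleGraph V) (H : SimpleGraph W) : SimpleGraph (V ⊕ W) where
  Adj x y :=
    match x, y with
    | Sum.inl a, Sum.inl b => G.Adj a b
    | Sum.inr a, Sum.inr b => H.Adj a b
    | Sum.inl _, Sum.inr _ => True
    | Sum.inr _, Sum.inl _ => True
  symm := ⟨by
    rintro (a | a) (b | b) h
    · exact G.adj_symm h
    · trivial
    · trivial
    · exact H.adj_symm h⟩
  loopless := ⟨by
    rintro (a | a) h
    · exact G.ne_of_adj h rfl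
    · exact H.ne_of_adj h rfl⟩

/-- `G` has an `H`-factor where `H` consists of the paths `P_k` for `k ∈ ks`: a spanning
subgraph all of whose connected components are paths `P_k` with `k ∈ ks`. -/
def HasPathFactor {V : Type*} (G : SimpleGraph V) (ks : Set ℕ) : Prop :=
  ∃ F : SimpleGraph V, F ≤ G ∧
    ∀ c : F.ConnectedComponent, ∃ k ∈ ks, Nonempty ((F.induce c.supp) ≃g pathGraph k)

/-- `K_1 ∨ (K_{n-2} ∪ K_1)`. -/
def specialGraph (n : ℕ) : SimpleGraph (Fin 1 ⊕ (Fin (n - 2) ⊕ Fin 1)) :=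
  graphJoin (⊤ : SimpleGraph (Fin 1))
    ((⊤ : SimpleGraph (Fin (n - 2))) ⊕g (⊤ : SimpleGraph (Fin 1)))

/-- The graph `K_s ∨ (K_{n−⌊5s/3⌋−1} ∪ (⌊2s/3⌋+1)K_1)`. -/
def bigGraph (n s : ℕ) :
    SimpleGraph (Fin s ⊕ (Fin (n - 5 * s / 3 - 1) ⊕ Fin (2 * s / 3 + 1))) :=
  graphJoin (⊤ : SimpleGraph (Fin s))
    ((⊤ : SimpleGraph (Fin (n - 5 * s / 3 - 1))) ⊕g (⊥ : SimpleGraph (Fin (2 * s / 3 + 1))))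


/-!
For `s = 2` the two graphs coincide. For `s = 3k + 2 ≥ 5` both sides are compared with `n - 3`.
The graph `K_2 ∨ (K_{n-4} ∪ 2K_1)` contains `K_{n-2}`, and the Rayleigh quotient of the indicator
vector of that clique is at least `n - 3`. On the other side, the positive vector equal to `4/3`,
`1` and `e` on the three parts of `K_s ∨ (K_{n-⌊5s/3⌋-1} ∪ (⌊2s/3⌋+1)K_1)`, with `e` chosen so that
the rows of the isolated vertices are tight, satisfies `A_α x ≤ (n - 3) x`; by the
Collatz–Wielandt bound for nonnegative matrices, `λ_α ≤ n - 3`.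
-/

open Matrix

section Spectrum
variable {n : Type*} [Fintype n] [DecidableEq n]

lemma Matrix.exists_mulVec_eq_smul_of_mem_spectrum {K : Type*} [Field K] {A : Matrix n n K}
    {μ : K} (h : μ ∈ spectrum K A) : ∃ v ≠ 0, A *ᵥ v = μ • v := by
  rw [← AlgEquiv.spectrum_eq toLinAlgEquiv' A, ← Module.End.hasEigenvalue_iff_mem_spectrum] at h
  obtain ⟨v, hv⟩ := h.exists_hasEigenvector
  exact ⟨v, hv.2, by simpa using hv.apply_eq_smul⟩

theorem Matrix.sSup_spectrum_le_of_mulVec_le {A : Matrix n n ℝ} (hA : ∀ i j, 0 ≤ A i j)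
    {x : n → ℝ} (hx : ∀ i, 0 < x i) {c : ℝ} (hc : 0 ≤ c) (hAx : ∀ i, (A *ᵥ x) i ≤ c * x i) :
    sSup (spectrum ℝ A) ≤ c := by
  refine Real.sSup_le (fun μ hμ => ?_) hc
  obtain ⟨v, hv0, hv⟩ := exists_mulVec_eq_smul_of_mem_spectrum hμ
  obtain ⟨j₀, hj₀⟩ : ∃ j, v j ≠ 0 := Function.ne_iff.mp hv0
  obtain ⟨i, -, hi⟩ :=
    Finset.exists_max_image Finset.univ (fun j => |v j| / x j) ⟨j₀, Finset.mem_univ _⟩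
  set t := |v i| / x i
  have hvt : ∀ j, |v j| ≤ t * x j := fun j => (div_le_iff₀ (hx j)).mp (hi j (Finset.mem_univ j))
  have hvi : |v i| = t * x i := (div_mul_cancel₀ _ (hx i).ne').symm
  have ht : 0 < t := pos_of_mul_pos_left ((abs_pos.2 hj₀).trans_le (hvt j₀)) (hx j₀).le
  have key : |μ| * (t * x i) ≤ c * (t * x i) := calc
    |μ| * (t * x i) = |(A *ᵥ v) i| := by rw [hv, Pi.smul_apply, smul_eq_mul, abs_mul, hvi]
    _ ≤ ∑ j, |A i j * v j| := Finset.abs_sum_le_sum_abs _ _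
    _ = ∑ j, A i j * |v j| := by simp only [abs_mul, abs_of_nonneg (hA i _)]
    _ ≤ ∑ j, A i j * (t * x j) :=
      Finset.sum_le_sum fun j _ => mul_le_mul_of_nonneg_left (hvt j) (hA i j)
    _ = t * (A *ᵥ x) i := by
      simp only [mulVec, dotProduct, Finset.mul_sum]
      exact Finset.sum_congr rfl fun j _ => by ring
    _ ≤ t * (c * x i) := mul_le_mul_of_nonneg_left (hAx i) ht.le
    _ = c * (t * x i) := by ring
  exact (le_abs_self μ).trans (le_of_mul_le_mul_right key (mul_pos ht (hx i)))

open scoped MatrixOrder in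
theorem Matrix.IsHermitian.le_sSup_spectrum_of_le_dotProduct_mulVec {A : Matrix n n ℝ}
    (hA : A.IsHermitian) {y : n → ℝ} {c : ℝ} (hy : 0 < y ⬝ᵥ y)
    (h : c * (y ⬝ᵥ y) ≤ y ⬝ᵥ (A *ᵥ y)) : c ≤ sSup (spectrum ℝ A) := by
  have hle : A ≤ algebraMap ℝ _ (sSup (spectrum ℝ A)) := le_algebraMap_of_spectrum_le
    (fun x hx => le_csSup A.finite_real_spectrum.bddAbove hx) hA.isSelfAdjoint
  have := (le_iff.mp hle).dotProduct_mulVec_nonneg y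
  simp only [Algebra.algebraMap_eq_smul_one, sub_mulVec, smul_mulVec, one_mulVec, dotProduct_sub,
    dotProduct_smul, smul_eq_mul, star_trivial, sub_nonneg] at this
  exact le_of_mul_le_mul_right (h.trans this) hy

end Spectrum

section AAlpha
variable {V : Type*} [Fintype V] [DecidableEq V] (α : ℝ) (G : SimpleGraph V)

lemma lambdaAlpha_eq : lambdaAlpha α G = sSup (spectrum ℝ (aAlphaMatrix α G)) := by
  unfold lambdaAlpha
  congr!

lemma aAlphaMatrix_eq [DecidableRel G.Adj] :
    aAlphaMatrix α G = α • G.degMatrix ℝ + (1 - α) • G.adjMatrix ℝ := by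
  unfold aAlphaMatrix degMatrix
  congr!

lemma aAlphaMatrix_mulVec_apply [DecidableRel G.Adj] (x : V → ℝ) (v : V) :
    (aAlphaMatrix α G *ᵥ x) v = ∑ u ∈ G.neighborFinset v, (α * x v + (1 - α) * x u) := by
  simp only [aAlphaMatrix_eq, add_mulVec, smul_mulVec, Pi.add_apply, Pi.smul_apply,
    degMatrix_mulVec_apply, adjMatrix_mulVec_apply, Finset.sum_add_distrib, Finset.sum_const,
    card_neighborFinset_eq_degree, ← Finset.mul_sum, smul_eq_mul, nsmul_eq_mul]
  ring

lemma aAlphaMatrix_isHermitian : (aAlphaMatrix α G).IsHermitian := by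
  classical
  rw [aAlphaMatrix_eq]
  exact ((G.isHermitian_degMatrix ℝ).smul (.all _)).add ((G.isHermitian_adjMatrix ℝ).smul (.all _))

lemma aAlphaMatrix_nonneg (hα0 : 0 ≤ α) (hα1 : α ≤ 1) (i j : V) :
    0 ≤ aAlphaMatrix α G i j := by
  classical
  have hD : 0 ≤ G.degMatrix ℝ i j := by
    rw [degMatrix, diagonal_apply]; split_ifs <;> positivity
  have hA : 0 ≤ G.adjMatrix ℝ i j := by
    rw [adjMatrix_apply]; split_ifs <;> positivity
  have : 0 ≤ 1 - α := sub_nonneg.mpr hα1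
  rw [aAlphaMatrix_eq, Matrix.add_apply, Matrix.smul_apply, Matrix.smul_apply, smul_eq_mul,
    smul_eq_mul]
  positivity

end AAlpha

lemma sum_ite_eq_zero_else {ι : Type*} [Fintype ι] [DecidableEq ι] (v : ι) (x : ℝ) :
    ∑ u, (if v = u then 0 else x) = (Fintype.card ι - 1) * x := by
  rw [← Finset.sum_erase_add _ _ (Finset.mem_univ v), if_pos rfl, add_zero,
    Finset.sum_congr rfl fun u hu => if_neg (Finset.ne_of_mem_erase hu).symm, Finset.sum_const,
    Finset.card_erase_of_mem (Finset.mem_univ v), Finset.card_univ, nsmul_eq_mul,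
    Nat.cast_pred (Fintype.card_pos_iff.2 ⟨v⟩)]

/-- `K_p ∨ (K_q ∪ rK_1)`; `bigGraph n s` unfolds to an instance of it. -/
def cliqueJoinUnion (p q r : ℕ) : SimpleGraph (Fin p ⊕ (Fin q ⊕ Fin r)) :=
  graphJoin ⊤ ((⊤ : SimpleGraph (Fin q)) ⊕g (⊥ : SimpleGraph (Fin r)))

def blockVec {p q r : ℕ} (a b c : ℝ) : Fin p ⊕ (Fin q ⊕ Fin r) → ℝ :=
  Sum.elim (fun _ => a) (Sum.elim (fun _ => b) fun _ => c)

section CliqueJoinUnion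
variable {p q r : ℕ}

lemma blockVec_dotProduct (a b c : ℝ) (w : Fin p ⊕ (Fin q ⊕ Fin r) → ℝ) :
    blockVec a b c ⬝ᵥ w =
      a * ∑ i, w (.inl i) + b * ∑ i, w (.inr (.inl i)) + c * ∑ i, w (.inr (.inr i)) := by
  simp [dotProduct, Fintype.sum_sum_type, blockVec, Finset.mul_sum, add_assoc]

variable (α a b c : ℝ)

lemma aAlphaMatrix_mulVec_blockVec_inl (v : Fin p) :
    (aAlphaMatrix α (cliqueJoinUnion p q r) *ᵥ blockVec a b c) (.inl v) =
      (p - 1) * a + q * (α * a + (1 - α) * b) + r * (α * a + (1 - α) * c) := by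
  classical
  rw [aAlphaMatrix_mulVec_apply, neighborFinset_eq_filter, Finset.sum_filter,
    Fintype.sum_sum_type, Fintype.sum_sum_type]
  simp only [cliqueJoinUnion, graphJoin, top_adj, ne_eq, sum_adj, bot_adj, blockVec,
    Sum.elim_inl, Sum.elim_inr, ite_not, sum_ite_eq_zero_else, Fintype.card_fin, ↓reduceIte,
    Finset.sum_const, Finset.card_univ, smul_add, nsmul_eq_mul]
  ring

lemma aAlphaMatrix_mulVec_blockVec_inr_inl (v : Fin q) :
    (aAlphaMatrix α (cliqueJoinUnion p q r) *ᵥ blockVec a b c) (.inr (.inl v)) =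
      p * (α * b + (1 - α) * a) + (q - 1) * b := by
  classical
  rw [aAlphaMatrix_mulVec_apply, neighborFinset_eq_filter, Finset.sum_filter,
    Fintype.sum_sum_type, Fintype.sum_sum_type]
  simp only [cliqueJoinUnion, graphJoin, top_adj, ne_eq, sum_adj, bot_adj, ↓reduceIte, blockVec,
    Sum.elim_inr, Sum.elim_inl, Finset.sum_const, Finset.card_univ, Fintype.card_fin, smul_add,
    nsmul_eq_mul, ite_not, sum_ite_eq_zero_else]
  ring

lemma aAlphaMatrix_mulVec_blockVec_inr_inr (v : Fin r) :
    (aAlphaMatrix α (cliqueJoinUnion p q r) *ᵥ blockVec a b c) (.inr (.inr v)) =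
      p * (α * c + (1 - α) * a) := by
  classical
  rw [aAlphaMatrix_mulVec_apply, neighborFinset_eq_filter, Finset.sum_filter,
    Fintype.sum_sum_type, Fintype.sum_sum_type]
  simp only [cliqueJoinUnion, graphJoin, top_adj, ne_eq, sum_adj, bot_adj, ↓reduceIte, blockVec,
    Sum.elim_inr, Sum.elim_inl, Finset.sum_const, Finset.card_univ, Fintype.card_fin, smul_add,
    nsmul_eq_mul]
  ring

end CliqueJoinUnion

section Bounds
variable {p q r : ℕ}

lemma sub_one_le_lambdaAlpha_cliqueJoinUnion {α : ℝ} (hα : 0 ≤ α) (hpq : 0 < p + q) :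
    ((p + q : ℕ) : ℝ) - 1 ≤ lambdaAlpha α (cliqueJoinUnion p q r) := by
  rw [lambdaAlpha_eq]
  refine (aAlphaMatrix_isHermitian α _).le_sSup_spectrum_of_le_dotProduct_mulVec
    (y := blockVec 1 1 0) ?_ ?_
  · rw [blockVec_dotProduct]
    simp only [blockVec, Sum.elim_inl, Sum.elim_inr, Finset.sum_const, Finset.card_univ,
      Fintype.card_fin, nsmul_eq_mul, mul_one, one_mul, mul_zero, add_zero]
    exact_mod_cast hpq
  · rw [blockVec_dotProduct, blockVec_dotProduct]
    simp only [aAlphaMatrix_mulVec_blockVec_inl, aAlphaMatrix_mulVec_blockVec_inr_inl]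
    simp only [blockVec, Sum.elim_inl, Sum.elim_inr, Finset.sum_const, Finset.card_univ,
      Fintype.card_fin, nsmul_eq_mul, mul_one, one_mul, mul_zero, add_zero,
      zero_mul, Nat.cast_add]
    nlinarith [mul_nonneg (mul_nonneg p.cast_nonneg r.cast_nonneg) hα]

lemma lambdaAlpha_cliqueJoinUnion_le {α : ℝ} (hα0 : 0 ≤ α) (hα1 : α ≤ 2 / 3)
    (hpr : 3 * r = 2 * p + 2) (hp : 5 ≤ p) (hq : 2 ≤ q) (hn : 25 ≤ p + q + r) :
    lambdaAlpha α (cliqueJoinUnion p q r) ≤ ((p + q + r : ℕ) : ℝ) - 3 := by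
  have hP : (5 : ℝ) ≤ p := by exact_mod_cast hp
  have hQ : (2 : ℝ) ≤ q := by exact_mod_cast hq
  have hN : (25 : ℝ) ≤ p + q + r := by exact_mod_cast hn
  have hPR : 3 * (r : ℝ) = 2 * p + 2 := by exact_mod_cast hpr
  have hD : 0 < (p + q + r - 3 - α * p : ℝ) := by nlinarith
  obtain ⟨e, he0, he⟩ : ∃ e : ℝ, 0 < e ∧ e * (p + q + r - 3 - α * p) = 4 / 3 * (1 - α) * p :=
    ⟨_, div_pos (by nlinarith) hD, div_mul_cancel₀ _ hD.ne'⟩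
  -- the rows of `K_p` reduce to this once the denominator of `e` is cleared
  have key : 4 * (1 - α) ^ 2 * r * p ≤
      ((1 - α) * (q + 4 * r) - 8) * (p + q + r - 3 - α * p) := by
    nlinarith [mul_nonneg (sub_nonneg.2 hα1) (sub_nonneg.2 hP),
      mul_nonneg (sub_nonneg.2 hα1) (sub_nonneg.2 hQ),
      mul_nonneg (sub_nonneg.2 hQ) (sub_nonneg.2 hP),
      mul_nonneg (sub_nonneg.2 hα1) (sub_nonneg.2 hN),
      mul_nonneg (mul_nonneg (sub_nonneg.2 hα1) (sub_nonneg.2 hα1)) (sub_nonneg.2 hP)]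
  have hS : r * (1 - α) * e ≤ ((1 - α) * (q + 4 * r) - 8) / 3 := by
    refine le_of_mul_le_mul_right ?_ hD
    linear_combination (r * (1 - α)) * he + key / 3
  rw [lambdaAlpha_eq]
  push_cast
  refine sSup_spectrum_le_of_mulVec_le (aAlphaMatrix_nonneg α _ hα0 (by linarith))
    (x := blockVec (4 / 3) 1 e) ?_ (by linarith) ?_
  · rintro (v | v | v) <;> simp [blockVec, he0]
  · rintro (v | v | v)
    · rw [aAlphaMatrix_mulVec_blockVec_inl]
      simp only [blockVec, Sum.elim_inl]
      linarith
    · rw [aAlphaMatrix_mulVec_blockVec_inr_inl]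
      simp only [blockVec, Sum.elim_inl, Sum.elim_inr]
      nlinarith
    · rw [aAlphaMatrix_mulVec_blockVec_inr_inr]
      simp only [blockVec, Sum.elim_inr]
      linarith

end Bounds

theorem lambdaAlpha_bigGraph_le_case2_general (α : ℝ) (hα0 : 0 ≤ α) (hα1 : α < 2 / 3)
    (s n : ℕ) (hs3 : s % 3 = 2) (hn : 25 ≤ n) (hns : 5 * s + 8 ≤ 3 * n) :
    lambdaAlpha α (bigGraph n s) ≤ lambdaAlpha α (bigGraph n 2) := by
  obtain rfl | hs5 : s = 2 ∨ 5 ≤ s := by omega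
  · exact le_rfl
  calc lambdaAlpha α (bigGraph n s)
      ≤ ((s + (n - 5 * s / 3 - 1) + (2 * s / 3 + 1) : ℕ) : ℝ) - 3 :=
        lambdaAlpha_cliqueJoinUnion_le hα0 hα1.le (by omega) hs5 (by omega) (by omega)
    _ = ((2 + (n - 5 * 2 / 3 - 1) : ℕ) : ℝ) - 1 := by
        rw [show s + (n - 5 * s / 3 - 1) + (2 * s / 3 + 1) = 2 + (n - 5 * 2 / 3 - 1) + 2 by
          omega]
        push_cast
        ring
    _ ≤ lambdaAlpha α (bigGraph n 2) := sub_one_le_lambdaAlpha_cliqueJoinUnion hα0 (by omega)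

/-- For `0 ≤ α < 2/3` and integers `s ≥ 2` with `s ≡ 2 (mod 3)`, `n ≥ 25` and
`n ≥ (5s+8)/3` (i.e. `5s + 8 ≤ 3n`),
`λ_α(K_s ∨ (K_{n−⌊5s/3⌋−1} ∪ (⌊2s/3⌋+1)K_1)) ≤ λ_α(K_2 ∨ (K_{n−4} ∪ 2K_1))`. -/
theorem lambdaAlpha_bigGraph_le_case2 (α : ℝ) (hα0 : 0 ≤ α) (hα1 : α < 2 / 3)
    (s n : ℕ) (hs : 2 ≤ s) (hs3 : s % 3 = 2) (hn : 25 ≤ n) (hns : 5 * s + 8 ≤ 3 * n) :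
    lambdaAlpha α (bigGraph n s) ≤ lambdaAlpha α (bigGraph n 2) :=
  lambdaAlpha_bigGraph_le_case2_general α hα0 hα1 s n hs3 hn hns
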